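/- arXiv:1001.3655 — 7 statements merged into one kernel-verified Lean document; each statement's English description precedes it below -/
import Mathlib

section
/- For every k ∈ ℕ, the image under the Jamiołkowski isomorphism J of the set of k-positive linear maps on L(V) equals the set of k-block positive operators on V⊗V. -/
open scoped ComplexOrder Kronecker
open Matrix

/-- Square complex matrices of size `n`, i.e. operators on `V = ℂ^n`. -/
abbrev Mat (n : ℕ) := Matrix (Fin n) (Fin n) ℂ

/-- Operators on `V ⊗ V`, identified with matrices indexed by pairs. -/
abbrev Mat2 (n : ℕ) := Matrix (Fin n × Fin n) (Fin n × Fin n) ℂ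

/-- Linear maps on `L(V)`. -/
abbrev MapV (n : ℕ) := Mat n →ₗ[ℂ] Mat n

variable {n : ℕ}

/-- The Jamiołkowski isomorphism `J(Φ) = (Φ ⊗ id)(|ω⟩⟨ω|)`, `ω = Σ_α e_α ⊗ e_α`,
written out in matrix entries: `J(Φ)_{(a,b),(c,d)} = Φ(E_{bd})_{ac}`. -/
def Jmat (Φ : MapV n) : Mat2 n :=
  Matrix.of fun p q => Φ (Matrix.single p.2 q.2 1) p.1 q.1

/-- The inverse of the Jamiołkowski isomorphism. -/
noncomputable def Jinv (A : Mat2 n) : MapV n where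
  toFun ξ := Matrix.of fun α β => ∑ γ, ∑ δ, ξ γ δ * A (α, γ) (β, δ)
  map_add' x y := by
    ext α β
    simp [Matrix.add_apply, add_mul, Finset.sum_add_distrib]
  map_smul' c x := by
    ext α β
    simp [Matrix.smul_apply, smul_eq_mul, Finset.mul_sum, mul_assoc]

/-- The circled product `A ⊙ B = J(J⁻¹(A) ∘ J⁻¹(B))`. -/
noncomputable def odot (A B : Mat2 n) : Mat2 n := Jmat (Jinv A ∘ₗ Jinv B)

/-- Tensor product of vectors of `V`, as a vector of `V ⊗ V`. -/
def vecTens (u v : Fin n → ℂ) : Fin n × Fin n → ℂ := fun p => u p.1 * v p.2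

/-- The maximally entangled (unnormalized) vector `ω = Σ_α e_α ⊗ e_α`. -/
def omegaVec (n : ℕ) : Fin n × Fin n → ℂ := fun p => if p.1 = p.2 then 1 else 0

/-- `A` is `k`-block positive: `⟨Σ u_i⊗v_i, A (Σ u_i⊗v_i)⟩ ≥ 0` for all `u, v`. -/
def IsKBlockPos (k : ℕ) (A : Mat2 n) : Prop :=
  ∀ u v : Fin k → (Fin n → ℂ),
    0 ≤ star (∑ i, vecTens (u i) (v i)) ⬝ᵥ A.mulVec (∑ i, vecTens (u i) (v i))

/-- `A` is `k`-entangled: it lies in the convex hull of the operators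
`|w⟩⟨w|` with `w = Σ_{i=1}^k u_i ⊗ v_i`. -/
def IsKEntangled (k : ℕ) (A : Mat2 n) : Prop :=
  A ∈ convexHull ℝ {M : Mat2 n | ∃ u v : Fin k → (Fin n → ℂ),
    M = Matrix.vecMulVec (∑ i, vecTens (u i) (v i)) (star (∑ i, vecTens (u i) (v i)))}

/-- The map `Φ ⊗ id_k` on `L(V ⊗ ℂ^k)` (as a plain function on matrices). -/
def tensorIdFun (k : ℕ) (Φ : MapV n) (M : Matrix (Fin n × Fin k) (Fin n × Fin k) ℂ) :
    Matrix (Fin n × Fin k) (Fin n × Fin k) ℂ :=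
  Matrix.of fun p q => Φ (Matrix.of fun a b => M (a, p.2) (b, q.2)) p.1 q.1

/-- `Φ` is `k`-positive: `Φ ⊗ id_k` maps positive semidefinite operators on
`V ⊗ ℂ^k` to positive semidefinite operators. -/
def IsKPos (k : ℕ) (Φ : MapV n) : Prop :=
  ∀ M : Matrix (Fin n × Fin k) (Fin n × Fin k) ℂ, M.PosSemidef → (tensorIdFun k Φ M).PosSemidef

/-- `Φ` is completely positive: `k`-positive for every `k`. -/
def IsCompPos (Φ : MapV n) : Prop := ∀ k, IsKPos k Φ

/-- `Φ` is `k`-superpositive: `Φ(ξ) = Σ_i X_i^* ξ X_i` with all `rank X_i ≤ k`. -/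
def IsKSuperPos (k : ℕ) (Φ : MapV n) : Prop :=
  ∃ (m : ℕ) (X : Fin m → Mat n), (∀ i, (X i).rank ≤ k) ∧
    ∀ ξ, Φ ξ = ∑ i, (X i)ᴴ * ξ * X i

/-- The Hilbert–Schmidt inner product on `L(L(V))`:
`(Φ|Ψ) = Σ_{α,β} (Φ(E_{αβ}) | Ψ(E_{αβ}))` over the matrix-unit orthonormal basis. -/
noncomputable def hsInnerMap (Φ Ψ : MapV n) : ℂ :=
  ∑ α : Fin n, ∑ β : Fin n,
    ((Φ (Matrix.single α β 1))ᴴ * Ψ (Matrix.single α β 1)).trace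

/-- The Hilbert–Schmidt trace of a map `Θ` on `L(V)`:
`Tr Θ = Σ_{α,β} (E_{αβ} | Θ(E_{αβ}))`. -/
noncomputable def mapTrace (Θ : MapV n) : ℂ :=
  ∑ α : Fin n, ∑ β : Fin n,
    ((Matrix.single α β (1 : ℂ))ᴴ * Θ (Matrix.single α β 1)).trace

/-- The adjoint of a map `Φ` on `L(V)` with respect to the Hilbert–Schmidt
inner product `(A|B) = Tr(A^* B)`. -/
noncomputable def hsAdj (Φ : MapV n) : MapV n where
  toFun ξ := ∑ γ : Fin n, ∑ δ : Fin n,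
    (((Φ (Matrix.single γ δ 1))ᴴ * ξ).trace) • Matrix.single γ δ 1
  map_add' x y := by
    simp [Matrix.mul_add, Matrix.trace_add, add_smul, Finset.sum_add_distrib]
  map_smul' c x := by
    simp [Matrix.mul_smul, Matrix.trace_smul, smul_smul, Finset.smul_sum]

/-- `Φ` belongs to `J⁻¹(H(V⊗V))`, i.e. `J(Φ)` is Hermitian. -/
def InJinvH (Φ : MapV n) : Prop := (Jmat Φ).IsHermitian

/-- Dual cone of a set of Hermitian operators on `V ⊗ V`, inside `H(V⊗V)`. -/
def hermDual (S : Set (Mat2 n)) : Set (Mat2 n) :=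
  {B | B.IsHermitian ∧ ∀ A ∈ S, 0 ≤ (A * B).trace}

/-- Dual cone of a set of maps, inside `J⁻¹(H(V⊗V))`, with respect to the
Hilbert–Schmidt inner product of maps. -/
def mapDual (S : Set (MapV n)) : Set (MapV n) :=
  {Ψ | InJinvH Ψ ∧ ∀ Φ ∈ S, 0 ≤ hsInnerMap Φ Ψ}

/-- Operators on `ℂ^h ⊗ ℂ^d`. -/
abbrev MatH (h d : ℕ) := Matrix (Fin h × Fin d) (Fin h × Fin d) ℂ

/-- `ρ` is a state: positive semidefinite with trace one. -/
def IsState {h d : ℕ} (ρ : MatH h d) : Prop := ρ.PosSemidef ∧ ρ.trace = 1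

/-- `ρ` can be written as a sum of `l` tensor products of positive semidefinite
operators. -/
def HasSepLen (h d : ℕ) (ρ : MatH h d) (l : ℕ) : Prop :=
  ∃ (A : Fin l → Matrix (Fin h) (Fin h) ℂ) (B : Fin l → Matrix (Fin d) (Fin d) ℂ),
    (∀ i, (A i).PosSemidef) ∧ (∀ i, (B i).PosSemidef) ∧ ρ = ∑ i, A i ⊗ₖ B i

/-- `ρ` is separable: a convex combination of tensor products of states. -/
def IsSepState (h d : ℕ) (ρ : MatH h d) : Prop :=
  ∃ (l : ℕ) (p : Fin l → ℝ) (A : Fin l → Matrix (Fin h) (Fin h) ℂ)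
    (B : Fin l → Matrix (Fin d) (Fin d) ℂ),
    (∀ i, 0 < p i) ∧ (∑ i, p i = 1) ∧
    (∀ i, (A i).PosSemidef ∧ (A i).trace = 1) ∧
    (∀ i, (B i).PosSemidef ∧ (B i).trace = 1) ∧
    ρ = ∑ i, (p i : ℂ) • (A i ⊗ₖ B i)

/-- The length of a separable state: the least `l` such that `ρ` is a sum of `l`
tensor products of positive semidefinite operators. -/
noncomputable def sepLength (h d : ℕ) (ρ : MatH h d) : ℕ := sInf {l | HasSepLen h d ρ l}

/-- `ρ` is a sum of `r` tensor products of Hermitian operators. -/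
def HasHermDecomp (h d : ℕ) (ρ : MatH h d) (r : ℕ) : Prop :=
  ∃ (A : Fin r → Matrix (Fin h) (Fin h) ℂ) (B : Fin r → Matrix (Fin d) (Fin d) ℂ),
    (∀ i, (A i).IsHermitian) ∧ (∀ i, (B i).IsHermitian) ∧ ρ = ∑ i, A i ⊗ₖ B i

/-- The Schmidt rank of `ρ`: the least `r` such that `ρ` is a sum of `r` tensor
products of Hermitian operators. -/
noncomputable def schmidtRank (h d : ℕ) (ρ : MatH h d) : ℕ := sInf {r | HasHermDecomp h d ρ r}

/-- The block `(⟨υ|⊗id) A (|υ⟩⊗id)` of an operator `A` on `V ⊗ V`. -/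
noncomputable def blockFst (A : Mat2 n) (υ : Fin n → ℂ) : Mat n :=
  Matrix.of fun β δ => ∑ α, ∑ γ, star (υ α) * A (α, β) (γ, δ) * υ γ

/-- The block `(id⊗⟨u|) A (id⊗|u⟩)` of an operator `A` on `V ⊗ V`. -/
noncomputable def blockSnd (A : Mat2 n) (u : Fin n → ℂ) : Mat n :=
  Matrix.of fun α γ => ∑ β, ∑ δ, star (u β) * A (α, β) (γ, δ) * u δ

/-- Real square matrices indexed by pairs: operators on `X ⊗ X`, `X = ℝ^n`. -/
abbrev RMat2 (n : ℕ) := Matrix (Fin n × Fin n) (Fin n × Fin n) ℝ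

/-- The partial transposition `(id ⊗ t) A` on operators on `X ⊗ X`. -/
def ptrans (A : RMat2 n) : RMat2 n := Matrix.of fun p q => A (p.1, q.2) (q.1, p.2)

/-- The quartic polynomial `Σ_{a,b,c,d} A_{ab,cd} x^a y^b x^c y^d` associated to
an operator on `X ⊗ X`; `x`-variables are indexed by `Sum.inl`, `y`-variables
by `Sum.inr`. -/
noncomputable def quarticPoly (A : RMat2 n) : MvPolynomial (Fin n ⊕ Fin n) ℝ :=
  ∑ a, ∑ b, ∑ c, ∑ e, MvPolynomial.C (A (a, b) (c, e)) *
    MvPolynomial.X (Sum.inl a) * MvPolynomial.X (Sum.inr b) *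
    MvPolynomial.X (Sum.inl c) * MvPolynomial.X (Sum.inr e)

/-!
Write a positive semidefinite `M` on `V ⊗ ℂ^k` as `Nᴴ N`. Reading each row of `N` as a
`d × k` matrix `R`, the operator `(Φ ⊗ id_k)(Nᴴ N)` is the sum of the compressions
`(1 ⊗ R)ᴴ J(Φ) (1 ⊗ R)`, and a one-row `N` gives a single compression. So `Φ` is `k`-positive
iff every such compression of `J(Φ)` is positive semidefinite. Since `(1 ⊗ R) x = Σ_i x_i ⊗ R_i`
runs over all vectors of Schmidt rank at most `k`, the same condition is `k`-block positivity
of `J(Φ)`. Surjectivity onto the block positive operators comes from `J⁻¹`.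
-/

theorem Matrix.posSemidef_of_forall_dotProduct_mulVec_nonneg {m : Type*} [Fintype m]
    [DecidableEq m] {M : Matrix m m ℂ} (h : ∀ x, 0 ≤ star x ⬝ᵥ M *ᵥ x) : M.PosSemidef := by
  rw [← Matrix.isPositive_toEuclideanLin_iff, LinearMap.isPositive_iff_complex]
  intro x
  have hx := h x
  have hinner : inner ℂ (M.toEuclideanLin x) x = star (star x.ofLp ⬝ᵥ M *ᵥ x.ofLp) := by
    simp [EuclideanSpace.inner_eq_star_dotProduct, dotProduct_comm, ← star_dotProduct_star]
  rw [hinner, (IsSelfAdjoint.of_nonneg hx).star_eq]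
  exact ⟨Complex.ext rfl (Complex.nonneg_iff.1 hx).2, (Complex.nonneg_iff.1 hx).1⟩

theorem Jmat_Jinv (A : Mat2 n) : Jmat (Jinv A) = A := by
  ext ⟨a, b⟩ ⟨c, e⟩
  simp [Jmat, Jinv, Matrix.single, ite_and]

section

variable {k : ℕ}

theorem tensorIdFun_apply (Φ : MapV n) (M : Matrix (Fin n × Fin k) (Fin n × Fin k) ℂ)
    (a c : Fin n) (i j : Fin k) :
    tensorIdFun k Φ M (a, i) (c, j) = ∑ b, ∑ e, M (b, i) (e, j) * Jmat Φ (a, b) (c, e) := by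
  conv_lhs => rw [tensorIdFun, of_apply, matrix_eq_sum_single (of fun b e => M (b, i) (e, j))]
  simp only [map_sum, Matrix.sum_apply]
  refine Finset.sum_congr rfl fun b _ => Finset.sum_congr rfl fun e _ => ?_
  rw [← mul_one (of _ b e), ← smul_eq_mul, ← Matrix.smul_single, map_smul]
  simp [Jmat]

theorem one_kronecker_mulVec (R : Matrix (Fin n) (Fin k) ℂ) (x : Fin n × Fin k → ℂ) :
    ((1 : Mat n) ⊗ₖ R) *ᵥ x = ∑ i, vecTens (fun a => x (a, i)) (fun b => R b i) := by
  ext ⟨a, b⟩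
  simp [mulVec, dotProduct, vecTens, one_apply, Fintype.sum_prod_type, Finset.sum_apply, mul_comm]

theorem tensorIdFun_conjTranspose_mul_self {L : Type*} [Fintype L] (Φ : MapV n)
    (N : Matrix L (Fin n × Fin k) ℂ) :
    tensorIdFun k Φ (Nᴴ * N) = ∑ l, ((1 : Mat n) ⊗ₖ of (Function.curry (N l)))ᴴ * Jmat Φ *
      ((1 : Mat n) ⊗ₖ of (Function.curry (N l))) := by
  ext ⟨a, i⟩ ⟨c, j⟩
  rw [tensorIdFun_apply]
  simp only [mul_apply, conjTranspose_apply, RCLike.star_def, Finset.sum_mul, Matrix.sum_apply,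
    kroneckerMap_apply, one_apply, of_apply, Function.curry_apply, ite_mul, one_mul, zero_mul,
    apply_ite (starRingEnd ℂ), map_zero, Fintype.sum_prod_type, Finset.sum_ite_irrel,
    Finset.sum_const_zero, Finset.sum_ite_eq', Finset.mem_univ, ↓reduceIte, mul_ite, mul_zero]
  simp_rw [Finset.sum_comm (s := Finset.univ (α := Fin n)) (t := Finset.univ (α := L))]
  refine Finset.sum_congr rfl fun l _ => Finset.sum_comm.trans (Finset.sum_congr rfl fun e _ =>
    Finset.sum_congr rfl fun b _ => mul_right_comm _ _ _)

theorem isKBlockPos_iff_posSemidef (A : Mat2 n) :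
    IsKBlockPos k A ↔ ∀ R : Matrix (Fin n) (Fin k) ℂ,
      (((1 : Mat n) ⊗ₖ R)ᴴ * A * ((1 : Mat n) ⊗ₖ R)).PosSemidef := by
  have quadForm (R : Matrix (Fin n) (Fin k) ℂ) (x : Fin n × Fin k → ℂ) :
      star x ⬝ᵥ (((1 : Mat n) ⊗ₖ R)ᴴ * A * ((1 : Mat n) ⊗ₖ R)) *ᵥ x =
        star (∑ i, vecTens (fun a => x (a, i)) (fun b => R b i)) ⬝ᵥ
          A *ᵥ ∑ i, vecTens (fun a => x (a, i)) (fun b => R b i) := by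
    rw [← one_kronecker_mulVec, ← mulVec_mulVec, ← mulVec_mulVec, dotProduct_mulVec,
      ← star_mulVec]
  refine ⟨fun hA R => posSemidef_of_forall_dotProduct_mulVec_nonneg fun x => ?_, fun hA u v => ?_⟩
  · rw [quadForm]
    exact hA _ _
  · simpa [quadForm] using (hA (of fun b i => v i b)).dotProduct_mulVec_nonneg fun p => u p.2 p.1

theorem isKPos_iff_posSemidef (Φ : MapV n) :
    IsKPos k Φ ↔ ∀ R : Matrix (Fin n) (Fin k) ℂ,
      (((1 : Mat n) ⊗ₖ R)ᴴ * Jmat Φ * ((1 : Mat n) ⊗ₖ R)).PosSemidef := by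
  refine ⟨fun hΦ R => ?_, fun hR M hM => ?_⟩
  · have := hΦ _ (posSemidef_conjTranspose_mul_self (of fun (_ : Fin 1) p => R p.1 p.2))
    rw [tensorIdFun_conjTranspose_mul_self, Fin.sum_univ_one] at this
    exact this
  · obtain ⟨B, rfl⟩ : ∃ B : Matrix (Fin n × Fin k) (Fin n × Fin k) ℂ, M = Bᴴ * B := by
      open scoped MatrixOrder in exact CStarAlgebra.nonneg_iff_eq_star_mul_self.mp hM.nonneg
    rw [tensorIdFun_conjTranspose_mul_self]
    exact posSemidef_sum _ fun l _ => hR _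

end

theorem stmt1_general (d : ℕ) (k : ℕ) :
    Jmat '' {Φ : MapV d | IsKPos k Φ} = {A : Mat2 d | IsKBlockPos k A} := by
  ext A
  refine ⟨?_, fun hA => ⟨Jinv A, ?_, Jmat_Jinv A⟩⟩
  · rintro ⟨Φ, hΦ, rfl⟩
    exact (isKBlockPos_iff_posSemidef _).2 ((isKPos_iff_posSemidef Φ).1 hΦ)
  · refine (isKPos_iff_posSemidef _).2 ?_
    rw [Jmat_Jinv]
    exact (isKBlockPos_iff_posSemidef A).1 hA

/-- `J` maps the set of `k`-positive maps on `L(V)` onto the set of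
`k`-block positive operators on `V ⊗ V`. -/
theorem stmt1 (d : ℕ) (hd : 0 < d) (k : ℕ) :
    Jmat '' {Φ : MapV d | IsKPos k Φ} = {A : Mat2 d | IsKBlockPos k A} :=
  stmt1_general d k
end

section
/- For every k ∈ ℕ, the image under the Jamiołkowski isomorphism J of the set of k-superpositive linear maps on L(V) equals the set of k-entangled operators on V⊗V. -/
/-! The Kraus map `ξ ↦ X* ξ X` is sent by `J` to the rank-one projector `|w⟩⟨w|`, where `w` is the
entrywise conjugate of the vectorisation of `X`; a factorisation `X = Σ_{i ≤ k} u_i v_iᵀ` turns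
into a Schmidt decomposition `w = Σ_{i ≤ k} v̄_i ⊗ ū_i` and back, so `rank X ≤ k` exactly when `w`
has Schmidt rank at most `k`. Since these projectors form a cone containing `0`, their convex hull
is the set of their finite sums, which is the `J`-image of the sums of Kraus maps of rank `≤ k`. -/

open scoped ComplexOrder Kronecker
open Matrix

variable {n : ℕ}

section Rank

variable {K ι κ : Type*} [Field K] [Fintype κ]

theorem Matrix.rank_sum_vecMulVec_le {k : ℕ} (u : Fin k → ι → K) (v : Fin k → κ → K) :
    (∑ i, vecMulVec (u i) (v i)).rank ≤ k := by
  have hfactor : ∑ i, vecMulVec (u i) (v i) =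
      (of fun a i => u i a : Matrix ι (Fin k) K) * (of fun i b => v i b : Matrix (Fin k) κ K) := by
    ext a b
    simp only [Matrix.mul_apply, Matrix.sum_apply, vecMulVec_apply, of_apply]
  rw [hfactor]
  exact (rank_mul_le_right _ _).trans ((rank_le_card_height _).trans (Fintype.card_fin k).le)

theorem Matrix.exists_eq_sum_vecMulVec [Fintype ι] (X : Matrix ι κ K) :
    ∃ (u : Fin X.rank → ι → K) (v : Fin X.rank → κ → K), X = ∑ i, vecMulVec (u i) (v i) := by
  let W := Submodule.span K (Set.range Xᵀ)
  let b : Module.Basis (Fin X.rank) K W := (Module.finBasis K W).reindex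
    (finCongr (rank_eq_finrank_span_cols X).symm)
  have hcol : ∀ j, Xᵀ j ∈ W := fun j => Submodule.subset_span ⟨j, rfl⟩
  refine ⟨fun i => b i, fun i j => b.repr ⟨Xᵀ j, hcol j⟩ i, ?_⟩
  ext a j
  have hrepr := congrArg (fun x : W => (x : ι → K) a) (b.sum_repr ⟨Xᵀ j, hcol j⟩)
  simp only [Submodule.coe_sum, Submodule.coe_smul, Finset.sum_apply, Pi.smul_apply,
    smul_eq_mul] at hrepr
  simp only [Matrix.sum_apply, vecMulVec_apply]
  exact hrepr.symm.trans (Finset.sum_congr rfl fun _ _ => mul_comm _ _)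

theorem Matrix.exists_eq_sum_vecMulVec_of_rank_le [Fintype ι] {X : Matrix ι κ K} {k : ℕ}
    (h : X.rank ≤ k) :
    ∃ (u : Fin k → ι → K) (v : Fin k → κ → K), X = ∑ i, vecMulVec (u i) (v i) := by
  obtain ⟨u, v, hX⟩ := X.exists_eq_sum_vecMulVec
  have hinj := Fin.castLE_injective h
  refine ⟨Function.extend (Fin.castLE h) u 0, Function.extend (Fin.castLE h) v 0, hX.trans ?_⟩
  refine Fintype.sum_of_injective _ hinj _ _ (fun i hi => ?_) (fun i => ?_)
  · simp [Function.extend_apply' _ _ _ hi]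
  · simp [hinj.extend_apply]

theorem Matrix.rank_le_iff_exists_eq_sum_vecMulVec [Fintype ι] {X : Matrix ι κ K} {k : ℕ} :
    X.rank ≤ k ↔ ∃ (u : Fin k → ι → K) (v : Fin k → κ → K), X = ∑ i, vecMulVec (u i) (v i) :=
  ⟨exists_eq_sum_vecMulVec_of_rank_le, fun ⟨u, v, hX⟩ => hX ▸ rank_sum_vecMulVec_le u v⟩

end Rank

section Convex

variable {𝕜 E : Type*} [Field 𝕜] [LinearOrder 𝕜] [IsStrictOrderedRing 𝕜] [AddCommGroup E]
  [Module 𝕜 E]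

theorem mem_convexHull_iff_exists_fin_sum_of_smul_mem {s : Set E} (h0 : (0 : E) ∈ s)
    (hs : ∀ t : 𝕜, 0 ≤ t → ∀ x ∈ s, t • x ∈ s) {x : E} :
    x ∈ convexHull 𝕜 s ↔ ∃ (m : ℕ) (z : Fin m → E), (∀ i, z i ∈ s) ∧ ∑ i, z i = x := by
  constructor
  · rw [mem_convexHull_iff_exists_fintype]
    rintro ⟨ι, _, w, z, hw0, -, hz, rfl⟩
    let e := Fintype.equivFin ι
    refine ⟨Fintype.card ι, fun j => w (e.symm j) • z (e.symm j),
      fun j => hs _ (hw0 _) _ (hz _), ?_⟩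
    exact e.symm.sum_comp fun i => w i • z i
  · rintro ⟨m, z, hz, rfl⟩
    rcases Nat.eq_zero_or_pos m with rfl | hm
    · simpa using subset_convexHull 𝕜 s h0
    have hm' : (m : 𝕜) ≠ 0 := by positivity
    -- `∑ zᵢ` is the barycentre of the points `m • zᵢ`, which lie in the cone `s`.
    refine mem_convexHull_of_exists_fintype (fun _ => (m : 𝕜)⁻¹) (fun i => (m : 𝕜) • z i)
      (fun _ => by positivity) ?_ (fun i => hs _ (by positivity) _ (hz i)) ?_
    · simp [hm']
    · simp [smul_smul, hm']

end Convex

section Jamiolkowski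

variable {d k : ℕ}

noncomputable def krausMap (X : Mat d) : MapV d where
  toFun ξ := Xᴴ * ξ * X
  map_add' x y := by simp [Matrix.add_mul, Matrix.mul_add]
  map_smul' c x := by simp

theorem isKSuperPos_iff {Φ : MapV d} :
    IsKSuperPos k Φ ↔ ∃ (m : ℕ) (X : Fin m → Mat d), (∀ i, (X i).rank ≤ k) ∧
      ∑ i, krausMap (X i) = Φ := by
  simp only [IsKSuperPos, LinearMap.ext_iff, LinearMap.sum_apply, krausMap, LinearMap.coe_mk,
    AddHom.coe_mk, eq_comm]

theorem Jmat_sum {ι : Type*} (s : Finset ι) (Φ : ι → MapV d) :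
    Jmat (∑ i ∈ s, Φ i) = ∑ i ∈ s, Jmat (Φ i) := by
  ext p q
  simp [Jmat, Matrix.sum_apply]

theorem Jmat_krausMap (X : Mat d) : Jmat (krausMap X) = vecMulVec (star X.vec) X.vec := by
  ext ⟨a, b⟩ ⟨c, e⟩
  simp [Jmat, krausMap, vecMulVec_apply, Matrix.vec, Matrix.mul_apply, Matrix.single_apply,
    ite_and]

theorem star_vec_sum_vecMulVec (u v : Fin k → Fin d → ℂ) :
    star (∑ i, vecMulVec (u i) (v i)).vec = ∑ i, vecTens (star (v i)) (star (u i)) := by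
  ext ⟨a, b⟩
  simp [Matrix.vec, vecTens, vecMulVec_apply, Matrix.sum_apply, mul_comm]

variable (d k) in
def schmidtOuterProducts : Set (Mat2 d) :=
  {M | ∃ u v : Fin k → (Fin d → ℂ),
    M = vecMulVec (∑ i, vecTens (u i) (v i)) (star (∑ i, vecTens (u i) (v i)))}

theorem image_Jmat_krausMap_rank_le :
    (fun X => Jmat (krausMap X)) '' {X : Mat d | X.rank ≤ k} = schmidtOuterProducts d k := by
  ext M
  simp only [Set.mem_image, Set.mem_ofPred_eq, rank_le_iff_exists_eq_sum_vecMulVec,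
    schmidtOuterProducts]
  constructor
  · rintro ⟨X, ⟨u, v, rfl⟩, rfl⟩
    refine ⟨fun i => star (v i), fun i => star (u i), ?_⟩
    rw [Jmat_krausMap, ← star_vec_sum_vecMulVec, star_star]
  · rintro ⟨u, v, rfl⟩
    refine ⟨∑ i, vecMulVec (star (v i)) (star (u i)), ⟨_, _, rfl⟩, ?_⟩
    rw [Jmat_krausMap, ← star_star (∑ i, vecMulVec (star (v i)) (star (u i))).vec,
      star_vec_sum_vecMulVec]
    simp only [star_star]

theorem zero_mem_schmidtOuterProducts : (0 : Mat2 d) ∈ schmidtOuterProducts d k :=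
  ⟨0, 0, by ext; simp [vecTens, vecMulVec_apply]⟩

theorem smul_mem_schmidtOuterProducts {t : ℝ} (ht : 0 ≤ t) {M : Mat2 d}
    (hM : M ∈ schmidtOuterProducts d k) : t • M ∈ schmidtOuterProducts d k := by
  obtain ⟨u, v, rfl⟩ := hM
  refine ⟨fun i => (Real.sqrt t : ℂ) • u i, v, ?_⟩
  have hsum : ∑ i, vecTens ((Real.sqrt t : ℂ) • u i) (v i) =
      (Real.sqrt t : ℂ) • ∑ i, vecTens (u i) (v i) := by
    ext p
    simp [vecTens, Finset.mul_sum, mul_assoc]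
  have hsqrt : (Real.sqrt t : ℂ) * star (Real.sqrt t : ℂ) = t := by
    rw [Complex.star_def, Complex.conj_ofReal, ← Complex.ofReal_mul, Real.mul_self_sqrt ht]
  rw [hsum, star_smul, smul_vecMulVec, vecMulVec_smul, smul_smul, hsqrt, Complex.coe_smul]

end Jamiolkowski

theorem stmt2_general (d : ℕ) (k : ℕ) :
    Jmat '' {Φ : MapV d | IsKSuperPos k Φ} = {A : Mat2 d | IsKEntangled k A} := by
  ext A
  calc A ∈ Jmat '' {Φ : MapV d | IsKSuperPos k Φ}
      ↔ ∃ (m : ℕ) (X : Fin m → Mat d), (∀ i, (X i).rank ≤ k) ∧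
          ∑ i, Jmat (krausMap (X i)) = A := by
        simp only [Set.mem_image, Set.mem_ofPred_eq, isKSuperPos_iff]
        constructor
        · rintro ⟨_, ⟨m, X, hX, rfl⟩, rfl⟩
          exact ⟨m, X, hX, (Jmat_sum _ _).symm⟩
        · rintro ⟨m, X, hX, rfl⟩
          exact ⟨_, ⟨m, X, hX, rfl⟩, Jmat_sum _ _⟩
    _ ↔ ∃ (m : ℕ) (M : Fin m → Mat2 d), (∀ i, M i ∈ schmidtOuterProducts d k) ∧
          ∑ i, M i = A := by
        rw [← image_Jmat_krausMap_rank_le]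
        constructor
        · rintro ⟨m, X, hX, rfl⟩
          exact ⟨m, _, fun i => ⟨X i, hX i, rfl⟩, rfl⟩
        · rintro ⟨m, M, hM, rfl⟩
          choose X hX hXM using hM
          exact ⟨m, X, hX, by simp only [hXM]⟩
    _ ↔ IsKEntangled k A := (mem_convexHull_iff_exists_fin_sum_of_smul_mem
          zero_mem_schmidtOuterProducts fun _ ht _ => smul_mem_schmidtOuterProducts ht).symm

/-- `J` maps the set of `k`-superpositive maps on `L(V)` onto the
set of `k`-entangled operators on `V ⊗ V`. -/
theorem stmt2 (d : ℕ) (hd : 0 < d) (k : ℕ) :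
    Jmat '' {Φ : MapV d | IsKSuperPos k Φ} = {A : Mat2 d | IsKEntangled k A} :=
  stmt2_general d k
end

section
/- For every k ∈ ℕ, the cone of k-block positive operators on V⊗V equals the dual cone of the cone of k-entangled operators on V⊗V, taken inside the real vector space H(V⊗V) of Hermitian operators on V⊗V. -/
open scoped ComplexOrder Kronecker
open Matrix

variable {n : ℕ}

/-! The functional `M ↦ Tr(M B)` is `ℝ`-linear, so `{M | 0 ≤ Tr(M B)}` is convex and the dual
of a convex hull is the dual of its generators. For the generators `|w⟩⟨w|` one has
`Tr(|w⟩⟨w| B) = ⟨w, B w⟩`, which is exactly the quantity in `k`-block positivity. -/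

theorem trace_vecMulVec_mul {m R : Type*} [Fintype m] [CommSemiring R]
    (w v : m → R) (B : Matrix m m R) :
    (vecMulVec w v * B).trace = v ⬝ᵥ B *ᵥ w := by
  rw [vecMulVec_mul, trace_vecMulVec, dotProduct_comm, dotProduct_mulVec]

theorem convex_setOf_trace_mul_nonneg {m : Type*} [Fintype m] (B : Matrix m m ℂ) :
    Convex ℝ {M : Matrix m m ℂ | 0 ≤ (M * B).trace} :=
  (convex_Ici (0 : ℂ)).linear_preimage
    ((traceLinearMap m ℂ ℂ).restrictScalars ℝ ∘ₗ LinearMap.mulRight ℝ B)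

theorem hermDual_convexHull (S : Set (Mat2 n)) :
    hermDual (convexHull ℝ S) = hermDual S := by
  ext B
  exact and_congr_right fun _ => (convex_setOf_trace_mul_nonneg B).convexHull_subset_iff

theorem setOf_isKBlockPos_eq_hermDual (k : ℕ) :
    {A : Mat2 n | A.IsHermitian ∧ IsKBlockPos k A} =
      hermDual {M : Mat2 n | ∃ u v : Fin k → (Fin n → ℂ),
        M = vecMulVec (∑ i, vecTens (u i) (v i)) (star (∑ i, vecTens (u i) (v i)))} := by
  ext B
  refine and_congr_right fun _ => ?_
  constructor
  · rintro hB _ ⟨u, v, rfl⟩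
    rw [trace_vecMulVec_mul]
    exact hB u v
  · intro hB u v
    simpa only [trace_vecMulVec_mul] using hB _ ⟨u, v, rfl⟩

theorem stmt3_general (d : ℕ) (k : ℕ) :
    {A : Mat2 d | A.IsHermitian ∧ IsKBlockPos k A} =
      hermDual {A : Mat2 d | IsKEntangled k A} :=
  (setOf_isKBlockPos_eq_hermDual k).trans (hermDual_convexHull _).symm

/-- inside the real vector space of Hermitian operators on `V ⊗ V`,
the cone of `k`-block positive operators is the dual cone of the cone of
`k`-entangled operators. -/
theorem stmt3 (d : ℕ) (hd : 0 < d) (k : ℕ) :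
    {A : Mat2 d | A.IsHermitian ∧ IsKBlockPos k A} =
      hermDual {A : Mat2 d | IsKEntangled k A} :=
  stmt3_general d k
end

section
/- For every k ∈ ℕ, the cone of k-entangled operators on V⊗V equals the dual cone of the cone of k-block positive operators on V⊗V, taken inside the real vector space H(V⊗V) of Hermitian operators on V⊗V. -/
open scoped ComplexOrder Kronecker
open Matrix

variable {n : ℕ}

/-!
The `k`-entangled operators form the convex hull of the projections `|w⟩⟨w|` onto vectors
`w = Σ_{i<k} u_i ⊗ v_i`; this set is stable under nonnegative scaling, so it is a convex cone.
Since `Tr (A |w⟩⟨w|) = ⟨w, A w⟩`, it pairs nonnegatively with every `k`-block positive `A`.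

Conversely, the cone is closed: orthonormalizing the `u_i` (Gram–Schmidt) rewrites `w` with factors
bounded in terms of `Tr |w⟩⟨w|`, so by Carathéodory each trace sublevel set of the cone is a
continuous image of a compact set. A Hermitian `B` outside the cone is therefore separated from it
by a real functional (Farkas). Through the trace pairing that functional is `X ↦ Tr (A X)` for a
Hermitian `A`, which is `k`-block positive because it is nonnegative on the generators, while
`Tr (A B) < 0`.
-/

section ConvexCone

variable {E : Type*} [AddCommGroup E] [Module ℝ E]

theorem PointedCone.coe_hull_eq_convexHull {G : Set E} (h0 : (0 : E) ∈ G)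
    (hG : ∀ c : ℝ, 0 ≤ c → ∀ x ∈ G, c • x ∈ G) :
    (PointedCone.hull ℝ G : Set E) = convexHull ℝ G := by
  have hsmul : ∀ c : ℝ, 0 ≤ c → ∀ x ∈ convexHull ℝ G, c • x ∈ convexHull ℝ G := by
    intro c hc x hx
    refine convexHull_mono (Set.smul_set_subset_iff.2 fun y hy => hG c hc y hy) ?_
    rw [convexHull_smul]
    exact Set.smul_mem_smul_set hx
  refine subset_antisymm (fun x hx => ?_)
    (convexHull_min PointedCone.subset_hull (PointedCone.hull ℝ G).convex)
  induction hx using Submodule.span_induction with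
  | mem x hx => exact subset_convexHull ℝ G hx
  | zero => exact subset_convexHull ℝ G h0
  | add x y _ _ hx hy =>
    have := convex_convexHull ℝ G (hsmul 2 zero_le_two x hx) (hsmul 2 zero_le_two y hy)
      (by norm_num : (0 : ℝ) ≤ 1 / 2) (by norm_num : (0 : ℝ) ≤ 1 / 2) (by norm_num)
    rwa [smul_smul, smul_smul, show (1 / 2 : ℝ) * 2 = 1 by norm_num, one_smul, one_smul] at this
  | smul c x _ hx => exact hsmul c c.2 x hx

variable [FiniteDimensional ℝ E]

/-- Carathéodory's theorem, with the weights absorbed into the points. -/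
theorem exists_sum_eq_of_mem_convexHull {G : Set E} (h0 : (0 : E) ∈ G)
    (hG : ∀ c : ℝ, 0 ≤ c → ∀ x ∈ G, c • x ∈ G) {x : E} (hx : x ∈ convexHull ℝ G) :
    ∃ g : Fin (Module.finrank ℝ E + 1) → E, (∀ j, g j ∈ G) ∧ ∑ j, g j = x := by
  obtain ⟨ι, _, z, w, hzG, hz, hw, -, rfl⟩ := eq_pos_convex_span_of_mem_convexHull hx
  obtain ⟨e⟩ : Nonempty (ι ↪ Fin (Module.finrank ℝ E + 1)) :=
    Function.Embedding.nonempty_of_card_le <| by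
      simpa using hz.card_le_finrank_succ.trans (Nat.add_le_add_right (Submodule.finrank_le _) 1)
  classical
  refine ⟨Function.extend e (fun i => w i • z i) 0, fun j => ?_, ?_⟩
  · rcases em (∃ i, e i = j) with ⟨i, rfl⟩ | hj
    · rw [e.injective.extend_apply]
      exact hG _ (hw i).le _ (hzG ⟨i, rfl⟩)
    · rw [Function.extend_apply' _ _ _ hj]
      exact h0
  · refine (Fintype.sum_of_injective e e.injective _ _ (fun j hj => ?_) fun i => ?_).symm
    · exact Function.extend_apply' _ _ _ (by simpa using hj)
    · exact (e.injective.extend_apply (fun i => w i • z i) 0 i).symm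

end ConvexCone

theorem isClosed_of_isCompact_inter_preimage_Iic {X : Type*} [TopologicalSpace X] [T2Space X]
    {C : Set X} {ℓ : X → ℝ} (hℓ : Continuous ℓ) (hC : ∀ R, IsCompact (C ∩ ℓ ⁻¹' Set.Iic R)) :
    IsClosed C := by
  refine closure_subset_iff_isClosed.1 fun x hx => ?_
  have hU : IsOpen (ℓ ⁻¹' Set.Iio (ℓ x + 1)) := isOpen_Iio.preimage hℓ
  have hxU : x ∈ ℓ ⁻¹' Set.Iio (ℓ x + 1) := by simp
  have := hU.inter_closure ⟨hxU, hx⟩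
  have hsub : ℓ ⁻¹' Set.Iio (ℓ x + 1) ∩ C ⊆ C ∩ ℓ ⁻¹' Set.Iic (ℓ x + 1) :=
    fun y hy => ⟨hy.2, show ℓ y ≤ ℓ x + 1 from le_of_lt hy.1⟩
  exact ((hC _).isClosed.closure_subset_iff.2 hsub this).1

section MatrixTrace

variable {ι : Type*} [Fintype ι]

noncomputable def reTraceForm : Matrix ι ι ℂ →ₗ[ℝ] Module.Dual ℝ (Matrix ι ι ℂ) :=
  LinearMap.mk₂ ℝ (fun C X => (C * X).trace.re) (by simp [Matrix.add_mul]) (by simp)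
    (by simp [Matrix.mul_add]) (by simp)

theorem reTraceForm_injective : Function.Injective (reTraceForm (ι := ι)) := by
  refine (injective_iff_map_eq_zero _).2 fun C hC => ?_
  have hre : (C * Cᴴ).trace.re = 0 := LinearMap.congr_fun hC Cᴴ
  have him := (Complex.le_def.1 (Matrix.posSemidef_self_mul_conjTranspose C).trace_nonneg).2
  exact Matrix.trace_mul_conjTranspose_self_eq_zero_iff.1 (Complex.ext hre him.symm)

theorem exists_isHermitian_trace_mul_eq (f : Module.Dual ℝ (Matrix ι ι ℂ)) :
    ∃ A : Matrix ι ι ℂ, A.IsHermitian ∧ ∀ X : Matrix ι ι ℂ, X.IsHermitian → (A * X).trace = f X := by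
  obtain ⟨C, rfl⟩ := ((LinearMap.injective_iff_surjective_of_finrank_eq_finrank
    Subspace.dual_finrank_eq.symm).1 reTraceForm_injective) f
  refine ⟨(2⁻¹ : ℝ) • (C + Cᴴ), ?_, fun X hX => ?_⟩
  · exact (Matrix.isHermitian_add_transpose_self C).smul (IsSelfAdjoint.all _)
  · have hstar : (Cᴴ * X).trace = star (C * X).trace := by
      rw [← Matrix.trace_conjTranspose, Matrix.conjTranspose_mul, hX.eq, Matrix.trace_mul_comm]
    rw [Matrix.smul_mul, Matrix.add_mul, Matrix.trace_smul, Matrix.trace_add, hstar,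
      Complex.star_def, Complex.add_conj]
    simp [reTraceForm, Complex.real_smul]

theorem trace_vecMulVec_star (w : ι → ℂ) :
    (vecMulVec w (star w)).trace = (‖WithLp.toLp 2 w‖ ^ 2 : ℝ) := by
  rw [Matrix.trace_vecMulVec, ← EuclideanSpace.inner_toLp_toLp, inner_self_eq_norm_sq_to_K]
  push_cast
  rfl

theorem trace_mul_vecMulVec_star (M : Matrix ι ι ℂ) (w : ι → ℂ) :
    (M * vecMulVec w (star w)).trace = star w ⬝ᵥ M *ᵥ w := by
  rw [Matrix.mul_vecMulVec, Matrix.trace_vecMulVec, dotProduct_comm]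

end MatrixTrace

namespace InnerProductSpace

variable {𝕜 E ι : Type*} [RCLike 𝕜] [NormedAddCommGroup E] [InnerProductSpace 𝕜 E]
  [LinearOrder ι] [LocallyFiniteOrderBot ι] [WellFoundedLT ι]

theorem inner_gramSchmidtNormed_eq_zero (f : ι → E) {i j : ι} (hij : i ≠ j) :
    ⟪gramSchmidtNormed 𝕜 f i, gramSchmidtNormed 𝕜 f j⟫_𝕜 = 0 := by
  simp [gramSchmidtNormed, inner_smul_left, inner_smul_right, gramSchmidt_orthogonal 𝕜 f hij]

theorem norm_gramSchmidtNormed_le_one (f : ι → E) (i : ι) : ‖gramSchmidtNormed 𝕜 f i‖ ≤ 1 := by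
  rcases eq_or_ne (gramSchmidtNormed 𝕜 f i) 0 with h | h
  · simp [h]
  · exact (gramSchmidtNormed_unit_length' h).le

theorem sum_inner_gramSchmidtNormed_smul [Fintype ι] (f : ι → E) {x : E}
    (hx : x ∈ Submodule.span 𝕜 (Set.range f)) :
    ∑ i, ⟪gramSchmidtNormed 𝕜 f i, x⟫_𝕜 • gramSchmidtNormed 𝕜 f i = x := by
  rw [← span_gramSchmidt 𝕜 f, ← span_gramSchmidtNormed_range] at hx
  induction hx using Submodule.span_induction with
  | mem x hx =>
    obtain ⟨j, rfl⟩ := hx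
    rw [Finset.sum_eq_single j
      (fun i _ hij => by rw [inner_gramSchmidtNormed_eq_zero f hij, zero_smul]) (by simp)]
    rcases eq_or_ne (gramSchmidtNormed 𝕜 f j) 0 with h | h
    · rw [h, smul_zero]
    · rw [inner_self_eq_norm_sq_to_K, gramSchmidtNormed_unit_length' h]
      simp
  | zero => simp
  | add x y _ _ hx hy => simp only [inner_add_right, add_smul, Finset.sum_add_distrib, hx, hy]
  | smul c x _ hx => simp only [inner_smul_right, mul_smul, ← Finset.smul_sum, hx]

end InnerProductSpace

section Entangled

open InnerProductSpace

variable {k : ℕ}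

def tensSum (u v : Fin k → Fin n → ℂ) : Fin n × Fin n → ℂ := ∑ i, vecTens (u i) (v i)

def entangledGen (n k : ℕ) : Set (Mat2 n) :=
  {M | ∃ u v : Fin k → Fin n → ℂ, M = vecMulVec (tensSum u v) (star (tensSum u v))}

theorem tensSum_smul_left (c : ℂ) (u v : Fin k → Fin n → ℂ) :
    tensSum (c • u) v = c • tensSum u v := by
  ext p
  simp [tensSum, vecTens, Finset.mul_sum, mul_assoc]

theorem zero_mem_entangledGen : (0 : Mat2 n) ∈ entangledGen n k :=
  ⟨0, 0, by ext; simp [tensSum, vecTens, Matrix.vecMulVec_apply]⟩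

theorem smul_mem_entangledGen {c : ℝ} (hc : 0 ≤ c) {M : Mat2 n} (hM : M ∈ entangledGen n k) :
    c • M ∈ entangledGen n k := by
  obtain ⟨u, v, rfl⟩ := hM
  refine ⟨(√c : ℂ) • u, v, ?_⟩
  rw [tensSum_smul_left, star_smul, Matrix.smul_vecMulVec, Matrix.vecMulVec_smul, smul_smul,
    Complex.star_def, Complex.conj_ofReal, ← Complex.ofReal_mul, Real.mul_self_sqrt hc,
    Complex.coe_smul]

theorem exists_bounded_tensSum_eq (u v : Fin k → Fin n → ℂ) :
    ∃ a c : Fin k → Fin n → ℂ, ‖a‖ ≤ 1 ∧ ‖c‖ ≤ ‖WithLp.toLp 2 (tensSum u v)‖ ∧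
      tensSum a c = tensSum u v := by
  set w := tensSum u v
  -- The columns of `w` lie in the span of the `u i`: expand them in its Gram–Schmidt basis.
  let e := gramSchmidtNormed ℂ fun i => WithLp.toLp 2 (u i)
  let col : Fin n → EuclideanSpace ℂ (Fin n) := fun β => WithLp.toLp 2 fun α => w (α, β)
  have hcol : ∀ β, col β = ∑ i, v i β • WithLp.toLp 2 (u i) := by
    intro β
    ext α
    simp [col, w, tensSum, vecTens, mul_comm]
  have hcol_norm : ∀ β, ‖col β‖ ≤ ‖WithLp.toLp 2 w‖ := by
    intro β
    simp only [EuclideanSpace.norm_eq]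
    gcongr
    rw [Fintype.sum_prod_type_right]
    exact Finset.single_le_sum (f := fun β => ∑ α, ‖w (α, β)‖ ^ 2)
      (fun _ _ => by positivity) (Finset.mem_univ β)
  refine ⟨fun j => (e j).ofLp, fun j β => ⟪e j, col β⟫_ℂ, ?_, ?_, ?_⟩
  · refine (pi_norm_le_iff_of_nonneg zero_le_one).2 fun j =>
      (pi_norm_le_iff_of_nonneg zero_le_one).2 fun α => ?_
    exact (PiLp.norm_apply_le (e j) α).trans (norm_gramSchmidtNormed_le_one _ j)
  · refine (pi_norm_le_iff_of_nonneg (norm_nonneg _)).2 fun j =>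
      (pi_norm_le_iff_of_nonneg (norm_nonneg _)).2 fun β => ?_
    calc ‖⟪e j, col β⟫_ℂ‖ ≤ ‖e j‖ * ‖col β‖ := norm_inner_le_norm _ _
      _ ≤ 1 * ‖WithLp.toLp 2 w‖ :=
        mul_le_mul (norm_gramSchmidtNormed_le_one _ j) (hcol_norm β) (norm_nonneg _) zero_le_one
      _ = _ := one_mul _
  · ext ⟨α, β⟩
    have hspan : col β ∈ Submodule.span ℂ (Set.range fun i => WithLp.toLp 2 (u i)) := by
      rw [hcol β]
      exact Submodule.sum_mem _ fun i _ => Submodule.smul_mem _ _ (Submodule.subset_span ⟨i, rfl⟩)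
    have h := congrArg (· α) (sum_inner_gramSchmidtNormed_smul _ hspan)
    simp only [WithLp.ofLp_sum, WithLp.ofLp_smul, Finset.sum_apply, Pi.smul_apply, smul_eq_mul] at h
    simpa [tensSum, vecTens, mul_comm] using h

theorem exists_bounded_of_mem_entangledGen {M : Mat2 n} (hM : M ∈ entangledGen n k) :
    ∃ a c : Fin k → Fin n → ℂ, ‖a‖ ≤ 1 ∧ ‖c‖ ^ 2 ≤ M.trace.re ∧
      M = vecMulVec (tensSum a c) (star (tensSum a c)) := by
  obtain ⟨u, v, rfl⟩ := hM
  obtain ⟨a, c, ha, hc, h⟩ := exists_bounded_tensSum_eq u v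
  refine ⟨a, c, ha, ?_, by rw [h]⟩
  rw [trace_vecMulVec_star, Complex.ofReal_re]
  gcongr

theorem coe_hull_entangledGen :
    (PointedCone.hull ℝ (entangledGen n k) : Set (Mat2 n)) = convexHull ℝ (entangledGen n k) :=
  PointedCone.coe_hull_eq_convexHull zero_mem_entangledGen fun _ hc _ hM =>
    smul_mem_entangledGen hc hM

theorem isClosed_hull_entangledGen :
    IsClosed (PointedCone.hull ℝ (entangledGen n k) : Set (Mat2 n)) := by
  refine isClosed_of_isCompact_inter_preimage_Iic (ℓ := fun M : Mat2 n => M.trace.re)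
    (by fun_prop) fun R => ?_
  let Φ : (Fin (Module.finrank ℝ (Mat2 n) + 1) → (Fin k → Fin n → ℂ) × (Fin k → Fin n → ℂ)) →
      Mat2 n := fun p => ∑ j, vecMulVec (tensSum (p j).1 (p j).2) (star (tensSum (p j).1 (p j).2))
  have hΦ : Continuous Φ := by
    unfold Φ tensSum vecTens
    fun_prop
  suffices h : (PointedCone.hull ℝ (entangledGen n k) : Set (Mat2 n)) ∩
      (fun M : Mat2 n => M.trace.re) ⁻¹' Set.Iic R =
      Φ '' Metric.closedBall 0 (max 1 √R) ∩ (fun M : Mat2 n => M.trace.re) ⁻¹' Set.Iic R by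
    rw [h]
    exact ((isCompact_closedBall _ _).image hΦ).inter_right (isClosed_Iic.preimage (by fun_prop))
  ext x
  constructor
  · rintro ⟨hx, hxR⟩
    refine ⟨?_, hxR⟩
    rw [coe_hull_entangledGen] at hx
    obtain ⟨g, hg, rfl⟩ := exists_sum_eq_of_mem_convexHull zero_mem_entangledGen
      (fun _ hc _ hM => smul_mem_entangledGen hc hM) hx
    choose a c ha hc hac using fun j => exists_bounded_of_mem_entangledGen (hg j)
    have htr : ∀ j, (g j).trace.re ≤ (∑ i, g i).trace.re := by
      intro j
      rw [Matrix.trace_sum, Complex.re_sum]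
      exact Finset.single_le_sum (fun i _ => (sq_nonneg _).trans (hc i)) (Finset.mem_univ j)
    refine ⟨fun j => (a j, c j), ?_, Finset.sum_congr rfl fun j _ => (hac j).symm⟩
    rw [mem_closedBall_zero_iff, pi_norm_le_iff_of_nonneg (by positivity)]
    refine fun j => norm_prod_le_iff.2 ⟨(ha j).trans (le_max_left _ _), ?_⟩
    exact (Real.le_sqrt_of_sq_le ((hc j).trans ((htr j).trans hxR))).trans (le_max_right _ _)
  · rintro ⟨⟨p, -, rfl⟩, hxR⟩
    exact ⟨Submodule.sum_mem _ fun j _ => PointedCone.subset_hull ⟨_, _, rfl⟩, hxR⟩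

noncomputable def entangledCone (n k : ℕ) : ProperCone ℝ (Mat2 n) where
  toSubmodule := PointedCone.hull ℝ (entangledGen n k)
  isClosed' := isClosed_hull_entangledGen

theorem convex_hermDual (S : Set (Mat2 n)) : Convex ℝ (hermDual S) := by
  rintro B₁ ⟨hB₁, h₁⟩ B₂ ⟨hB₂, h₂⟩ a b ha hb -
  refine ⟨(hB₁.smul (IsSelfAdjoint.all a)).add (hB₂.smul (IsSelfAdjoint.all b)), fun A hA => ?_⟩
  rw [Matrix.mul_add, Matrix.mul_smul, Matrix.mul_smul, Matrix.trace_add, Matrix.trace_smul,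
    Matrix.trace_smul]
  exact add_nonneg (smul_nonneg ha (h₁ A hA)) (smul_nonneg hb (h₂ A hA))

theorem convexHull_entangledGen_subset_hermDual :
    convexHull ℝ (entangledGen n k) ⊆ hermDual {A : Mat2 n | A.IsHermitian ∧ IsKBlockPos k A} := by
  refine convexHull_min ?_ (convex_hermDual _)
  rintro _ ⟨u, v, rfl⟩
  refine ⟨(posSemidef_vecMulVec_self_star _).isHermitian, fun A hA => ?_⟩
  rw [trace_mul_vecMulVec_star]
  exact hA.2 u v

theorem hermDual_subset_convexHull_entangledGen :
    hermDual {A : Mat2 n | A.IsHermitian ∧ IsKBlockPos k A} ⊆ convexHull ℝ (entangledGen n k) := by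
  rw [← coe_hull_entangledGen]
  intro B hB
  by_contra hBC
  have : LocallyConvexSpace ℝ (Mat2 n) :=
    inferInstanceAs (LocallyConvexSpace ℝ (Fin n × Fin n → Fin n × Fin n → ℂ))
  obtain ⟨f, hfC, hfB⟩ := (entangledCone n k).hyperplane_separation_point hBC
  obtain ⟨A, hA, hAf⟩ := exists_isHermitian_trace_mul_eq (f : Mat2 n →ₗ[ℝ] ℝ)
  have hAk : IsKBlockPos k A := fun u v => by
    rw [← trace_mul_vecMulVec_star, hAf _ (posSemidef_vecMulVec_self_star _).isHermitian]
    exact Complex.zero_le_real.2 (hfC _ (PointedCone.subset_hull ⟨u, v, rfl⟩))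
  have hAB := hB.2 A ⟨hA, hAk⟩
  rw [hAf B hB.1, Complex.zero_le_real] at hAB
  exact hfB.not_ge hAB

end Entangled

theorem stmt4_general (d : ℕ) (k : ℕ) :
    {A : Mat2 d | IsKEntangled k A} =
      hermDual {A : Mat2 d | A.IsHermitian ∧ IsKBlockPos k A} := by
  show convexHull ℝ (entangledGen d k) = _
  exact subset_antisymm convexHull_entangledGen_subset_hermDual
    hermDual_subset_convexHull_entangledGen

/-- inside the real vector space of Hermitian operators on `V ⊗ V`,
the cone of `k`-entangled operators is the dual cone of the cone of `k`-block
positive operators. -/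
theorem stmt4 (d : ℕ) (hd : 0 < d) (k : ℕ) :
    {A : Mat2 d | IsKEntangled k A} =
      hermDual {A : Mat2 d | A.IsHermitian ∧ IsKBlockPos k A} :=
  stmt4_general d k
end

section
/- For every k ∈ ℕ, the cone of k-positive maps on L(V) equals the dual cone of the cone of k-superpositive maps on L(V), taken inside J⁻¹(H(V⊗V)) with respect to the Hilbert–Schmidt inner product of maps. -/
open scoped ComplexOrder Kronecker
open Matrix

variable {n : ℕ}

/-!
Under the Jamiołkowski isomorphism the Hilbert–Schmidt pairing of maps becomes the trace
pairing of Choi matrices. The Choi matrix of `ξ ↦ X* ξ X` is the projector onto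
`w = (X* ⊗ 1) ω`, and the Schmidt rank of `w` is the rank of `X`; so pairing `Φ` against the
`k`-superpositive maps tests `⟨w, J(Φ) w⟩ ≥ 0` exactly on the vectors `w = Σ_{i ≤ k} u_i ⊗ v_i`,
i.e. it tests `k`-block positivity of `J(Φ)`. On a rank-one projector `|z⟩⟨z|`, the quadratic
form of `(Φ ⊗ id_k)(|z⟩⟨z|)` at `y` is that of `J(Φ)` at such a `w`, so `k`-block positivity of
`J(Φ)` is `k`-positivity of `Φ`.
-/

namespace Matrix

theorem exists_eq_sum_vecMulVec_of_rank_le_s5 {K m n : Type*} [Field K] [Fintype m] [Fintype n]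
    {k : ℕ} {A : Matrix m n K} (h : A.rank ≤ k) :
    ∃ (u : Fin k → m → K) (v : Fin k → n → K), A = ∑ i, vecMulVec (u i) (v i) := by
  let b := Module.finBasis K (Submodule.span K (Set.range A.col))
  let c : n → Submodule.span K (Set.range A.col) :=
    fun j => ⟨A.col j, Submodule.subset_span ⟨j, rfl⟩⟩
  have hcol : ∀ j, A.col j = ∑ l, b.repr (c j) l • (b l : m → K) := fun j => by
    simpa only [Submodule.coe_sum, SetLike.val_smul] using
      congrArg Subtype.val (b.sum_repr (c j)).symm
  rw [rank_eq_finrank_span_cols] at h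
  obtain ⟨t, rfl⟩ := Nat.exists_eq_add_of_le h
  refine ⟨Fin.append (fun l => (b l : m → K)) 0, Fin.append (fun l j => b.repr (c j) l) 0, ?_⟩
  ext i j
  have hij := congrFun (hcol j) i
  simp only [col_apply, Finset.sum_apply, Pi.smul_apply, smul_eq_mul] at hij
  simp [Fin.sum_univ_add, Matrix.sum_apply, vecMulVec_apply, hij, mul_comm]

theorem rank_sum_vecMulVec_le_s5 {R m n : Type*} [CommSemiring R] [StrongRankCondition R]
    [Fintype n] {k : ℕ} (u : Fin k → m → R) (v : Fin k → n → R) :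
    (∑ i, vecMulVec (u i) (v i)).rank ≤ k := by
  have hUV : ∑ i, vecMulVec (u i) (v i) = (of fun a i => u i a) * of v := by
    ext a b
    simp [mul_apply, Matrix.sum_apply, vecMulVec_apply]
  calc (∑ i, vecMulVec (u i) (v i)).rank ≤ (of fun a i => u i a).rank := by
        rw [hUV]; exact rank_mul_le_left _ _
    _ ≤ k := (rank_le_card_width _).trans_eq (Fintype.card_fin k)

theorem mul_single_one_mul_apply {α l m n o : Type*} [Semiring α] [Fintype m] [Fintype n]
    [DecidableEq m] [DecidableEq n] (A : Matrix l m α) (B : Matrix n o α) (a : l) (b : m)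
    (d : n) (c : o) : (A * single b d (1 : α) * B) a c = A a b * B d c := by
  rw [mul_apply, Finset.sum_eq_single d]
  · simp
  all_goals simp_all [mul_single_apply_of_ne]

end Matrix

section

variable {k : ℕ}

theorem apply_eq_sum_Jmat (Φ : MapV n) (ξ : Mat n) (a c : Fin n) :
    Φ ξ a c = ∑ b, ∑ d, ξ b d * Jmat Φ (a, b) (c, d) := by
  conv_lhs => rw [matrix_eq_sum_single ξ]
  have hsingle : ∀ b d, single b d (ξ b d) = ξ b d • single b d (1 : ℂ) := fun b d => by
    rw [smul_single, smul_eq_mul, mul_one]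
  simp_rw [hsingle, map_sum, _root_.map_smul, Matrix.sum_apply, Matrix.smul_apply, smul_eq_mul]
  rfl

theorem map_conjTranspose_of_isHermitian_Jmat {Φ : MapV n} (hΦ : (Jmat Φ).IsHermitian)
    (ξ : Mat n) : Φ ξᴴ = (Φ ξ)ᴴ := by
  ext a c
  rw [conjTranspose_apply, apply_eq_sum_Jmat, apply_eq_sum_Jmat, star_sum, Finset.sum_comm]
  simp only [star_sum, star_mul', conjTranspose_apply, ← hΦ.apply (c, _) (a, _), star_star]

theorem hsInnerMap_eq_trace_Jmat (Φ Ψ : MapV n) :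
    hsInnerMap Φ Ψ = ((Jmat Φ)ᴴ * Jmat Ψ).trace := by
  simp only [hsInnerMap, trace, diag, mul_apply, conjTranspose_apply, Fintype.sum_prod_type,
    Jmat, of_apply]
  rw [Finset.sum_comm]
  conv_rhs => rw [Finset.sum_comm]
  refine Finset.sum_congr rfl fun β _ => ?_
  rw [Finset.sum_comm]
  exact Finset.sum_congr rfl fun a _ => Finset.sum_comm

/-- The vector `(X* ⊗ 1) ω`. -/
def choiVec (X : Mat n) : Fin n × Fin n → ℂ := fun p => star (X p.2 p.1)

theorem choiVec_conjTranspose_sum_vecMulVec (u v : Fin k → Fin n → ℂ) :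
    choiVec (∑ i, vecMulVec (u i) (v i))ᴴ = ∑ i, vecTens (u i) (v i) := by
  funext p
  simp [choiVec, Matrix.sum_apply, vecMulVec_apply, vecTens, Finset.sum_apply]

theorem Jmat_eq_sum_vecMulVec_of_kraus {m : ℕ} {Ψ : MapV n} {X : Fin m → Mat n}
    (hΨ : ∀ ξ, Ψ ξ = ∑ i, (X i)ᴴ * ξ * X i) :
    Jmat Ψ = ∑ i, vecMulVec (choiVec (X i)) (star (choiVec (X i))) := by
  ext p q
  simp [Jmat, hΨ, Matrix.sum_apply, mul_single_one_mul_apply, vecMulVec_apply, choiVec]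

theorem posSemidef_Jmat_of_kraus {m : ℕ} {Ψ : MapV n} {X : Fin m → Mat n}
    (hΨ : ∀ ξ, Ψ ξ = ∑ i, (X i)ᴴ * ξ * X i) : (Jmat Ψ).PosSemidef := by
  rw [Jmat_eq_sum_vecMulVec_of_kraus hΨ]
  exact posSemidef_sum _ fun i _ => posSemidef_vecMulVec_self_star _

theorem hsInnerMap_eq_sum_of_kraus {m : ℕ} {Ψ : MapV n} {X : Fin m → Mat n}
    (hΨ : ∀ ξ, Ψ ξ = ∑ i, (X i)ᴴ * ξ * X i) (Φ : MapV n) :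
    hsInnerMap Ψ Φ = ∑ i, star (choiVec (X i)) ⬝ᵥ Jmat Φ *ᵥ choiVec (X i) := by
  rw [hsInnerMap_eq_trace_Jmat, (posSemidef_Jmat_of_kraus hΨ).isHermitian.eq,
    Jmat_eq_sum_vecMulVec_of_kraus hΨ, Finset.sum_mul, trace_sum]
  simp only [vecMulVec_mul, trace_vecMulVec, dotProduct_comm _ (_ ᵥ* _), dotProduct_mulVec]

theorem dotProduct_Jmat_mulVec_vecTens (Φ : MapV n) (a b c e : Fin n → ℂ) :
    star (vecTens a b) ⬝ᵥ Jmat Φ *ᵥ vecTens c e = star a ⬝ᵥ Φ (vecMulVec (star b) e) *ᵥ c := by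
  simp only [dotProduct, mulVec, apply_eq_sum_Jmat, Fintype.sum_prod_type, vecTens,
    vecMulVec_apply, Pi.star_apply, star_mul', Finset.mul_sum, Finset.sum_mul]
  refine Finset.sum_congr rfl fun α _ => Finset.sum_comm.trans ?_
  exact Finset.sum_congr rfl fun γ _ => Finset.sum_congr rfl fun β _ =>
    Finset.sum_congr rfl fun δ _ => by ring

theorem dotProduct_tensorIdFun_vecMulVec (Φ : MapV n) (y z : Fin n × Fin k → ℂ) :
    star y ⬝ᵥ tensorIdFun k Φ (vecMulVec z (star z)) *ᵥ y
      = star (∑ i, vecTens (fun a => y (a, i)) (fun b => star (z (b, i)))) ⬝ᵥ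
          Jmat Φ *ᵥ ∑ i, vecTens (fun a => y (a, i)) (fun b => star (z (b, i))) := by
  have hblock : ∀ i j, (of fun b d => vecMulVec z (star z) (b, i) (d, j))
      = vecMulVec (star fun b => star (z (b, i))) fun d => star (z (d, j)) := by
    intro i j; ext b d; simp [vecMulVec_apply]
  simp only [star_sum, sum_dotProduct, mulVec_sum, dotProduct_sum,
    dotProduct_Jmat_mulVec_vecTens]
  simp only [dotProduct, mulVec, Fintype.sum_prod_type_right, tensorIdFun, of_apply, hblock,
    Finset.mul_sum]
  conv_rhs => rw [Finset.sum_comm]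
  exact Finset.sum_congr rfl fun i _ => Finset.sum_comm

theorem tensorIdFun_sum (Φ : MapV n) {ι : Type*} (s : Finset ι)
    (M : ι → Matrix (Fin n × Fin k) (Fin n × Fin k) ℂ) :
    tensorIdFun k Φ (∑ r ∈ s, M r) = ∑ r ∈ s, tensorIdFun k Φ (M r) := by
  ext p q
  have hsum : (of fun a b => (∑ r ∈ s, M r) (a, p.2) (b, q.2))
      = ∑ r ∈ s, of fun a b => M r (a, p.2) (b, q.2) := by
    ext a b; simp [Matrix.sum_apply]
  change Φ _ p.1 q.1 = _
  rw [hsum, map_sum, Matrix.sum_apply, Matrix.sum_apply]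
  rfl

theorem isHermitian_tensorIdFun {Φ : MapV n} (hΦ : (Jmat Φ).IsHermitian)
    {M : Matrix (Fin n × Fin k) (Fin n × Fin k) ℂ} (hM : M.IsHermitian) :
    (tensorIdFun k Φ M).IsHermitian := by
  ext p q
  have hblock : (of fun a b => M (a, q.2) (b, p.2)) = (of fun a b => M (a, p.2) (b, q.2))ᴴ := by
    ext a b; exact (hM.apply (a, q.2) (b, p.2)).symm
  simp only [tensorIdFun, conjTranspose_apply, of_apply, hblock,
    map_conjTranspose_of_isHermitian_Jmat hΦ, star_star]

theorem IsKPos.isKBlockPos {Φ : MapV n} (hΦ : IsKPos k Φ) : IsKBlockPos k (Jmat Φ) := by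
  intro u v
  have h := (hΦ _ (posSemidef_vecMulVec_self_star fun p => star (v p.2 p.1)))
    |>.dotProduct_mulVec_nonneg fun p => u p.2 p.1
  simpa [dotProduct_tensorIdFun_vecMulVec] using h

theorem isKPos_of_isKBlockPos {Φ : MapV n} (hΦ : (Jmat Φ).IsHermitian)
    (h : IsKBlockPos k (Jmat Φ)) : IsKPos k Φ := by
  intro M hM
  refine .of_dotProduct_mulVec_nonneg (isHermitian_tensorIdFun hΦ hM.isHermitian) fun y => ?_
  obtain ⟨m, z, rfl⟩ := posSemidef_iff_eq_sum_vecMulVec.mp hM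
  simp only [tensorIdFun_sum, sum_mulVec, dotProduct_sum, dotProduct_tensorIdFun_vecMulVec]
  exact Finset.sum_nonneg fun r _ => h _ _

end

theorem stmt5_general (d : ℕ) (k : ℕ) :
    {Φ : MapV d | InJinvH Φ ∧ IsKPos k Φ} =
      mapDual {Φ : MapV d | InJinvH Φ ∧ IsKSuperPos k Φ} := by
  ext Φ
  refine ⟨fun ⟨hΦ, hpos⟩ => ⟨hΦ, ?_⟩, fun ⟨hΦ, hdual⟩ => ⟨hΦ, isKPos_of_isKBlockPos hΦ ?_⟩⟩
  · rintro Ψ ⟨-, m, X, hrank, hΨ⟩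
    rw [hsInnerMap_eq_sum_of_kraus hΨ]
    refine Finset.sum_nonneg fun i _ => ?_
    obtain ⟨u, v, hX⟩ :=
      exists_eq_sum_vecMulVec_of_rank_le_s5 ((rank_conjTranspose (X i)).trans_le (hrank i))
    rw [← conjTranspose_conjTranspose (X i), hX, choiVec_conjTranspose_sum_vecMulVec]
    exact hpos.isKBlockPos u v
  · intro u v
    set X := (∑ i, vecMulVec (u i) (v i))ᴴ
    have hΨ : ∀ ξ, (LinearMap.mulRight ℂ X ∘ₗ LinearMap.mulLeft ℂ Xᴴ) ξ
        = ∑ _ : Fin 1, Xᴴ * ξ * X := fun ξ => by simp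
    have hrank : X.rank ≤ k := (rank_conjTranspose _).trans_le (rank_sum_vecMulVec_le_s5 u v)
    have h := hdual _
      ⟨(posSemidef_Jmat_of_kraus hΨ).isHermitian, 1, fun _ => X, fun _ => hrank, hΨ⟩
    rwa [hsInnerMap_eq_sum_of_kraus hΨ, Fin.sum_univ_one,
      choiVec_conjTranspose_sum_vecMulVec] at h

/-- inside `J⁻¹(H(V⊗V))`, the cone of `k`-positive maps is the dual
cone of the cone of `k`-superpositive maps, with respect to the Hilbert–Schmidt
inner product of maps. -/
theorem stmt5 (d : ℕ) (hd : 0 < d) (k : ℕ) :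
    {Φ : MapV d | InJinvH Φ ∧ IsKPos k Φ} =
      mapDual {Φ : MapV d | InJinvH Φ ∧ IsKSuperPos k Φ} :=
  stmt5_general d k
end

section
/- Let Ψ be a k-positive linear map on L(V) and let u_1,…,u_k ∈ V. Then there exist m ∈ ℕ and vectors w_l^{(n)} ∈ V (l = 1,…,k, n = 1,…,m) such that Ψ(|u_i⟩⟨u_j|) = Σ_{n=1}^m |w_i^{(n)}⟩⟨w_j^{(n)}| for all i, j ∈ {1,…,k}. -/
open scoped ComplexOrder Kronecker
open Matrix

variable {n : ℕ}

/-! `Ψ ⊗ id_k` maps the rank-one projection onto `x = Σ_i u_i ⊗ e_i` to a positive semidefinite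
matrix whose `(i, j)` block is `Ψ(|u_i⟩⟨u_j|)`. Writing it as a sum of rank-one projections
`|v_t⟩⟨v_t|` and cutting each `v_t` into its `k` components `w_i^{(t)} ∈ V` gives the claim. -/

theorem Matrix.PosSemidef.exists_submatrix_prod_eq_sum_vecMulVec {𝕜 ι κ : Type*} [RCLike 𝕜]
    [Finite ι] [Finite κ] {P : Matrix (ι × κ) (ι × κ) 𝕜} (hP : P.PosSemidef) :
    ∃ (m : ℕ) (w : κ → Fin m → ι → 𝕜), ∀ i j,
      P.submatrix (·, i) (·, j) = ∑ t, vecMulVec (w i t) (star (w j t)) := by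
  obtain ⟨m, v, rfl⟩ := posSemidef_iff_eq_sum_vecMulVec.mp hP
  refine ⟨m, fun i t a => v t (a, i), fun i j => ?_⟩
  ext a b
  simp [Matrix.sum_apply, vecMulVec_apply]

theorem submatrix_tensorIdFun {n k : ℕ} (Φ : MapV n)
    (M : Matrix (Fin n × Fin k) (Fin n × Fin k) ℂ) (i j : Fin k) :
    (tensorIdFun k Φ M).submatrix (·, i) (·, j) = Φ (M.submatrix (·, i) (·, j)) :=
  rfl

theorem stmt8_general (d : ℕ) (k : ℕ) (Ψ : MapV d) (hΨ : IsKPos k Ψ)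
    (u : Fin k → (Fin d → ℂ)) :
    ∃ (m : ℕ) (w : Fin k → Fin m → (Fin d → ℂ)),
      ∀ i j : Fin k, Ψ (Matrix.vecMulVec (u i) (star (u j))) =
        ∑ t : Fin m, Matrix.vecMulVec (w i t) (star (w j t)) := by
  let x : Fin d × Fin k → ℂ := fun p => u p.2 p.1
  have hPos : (tensorIdFun k Ψ (vecMulVec x (star x))).PosSemidef :=
    hΨ _ (posSemidef_vecMulVec_self_star x)
  obtain ⟨m, w, hw⟩ := hPos.exists_submatrix_prod_eq_sum_vecMulVec
  refine ⟨m, w, fun i j => ?_⟩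
  calc Ψ (vecMulVec (u i) (star (u j)))
      = Ψ ((vecMulVec x (star x)).submatrix (·, i) (·, j)) := rfl
    _ = (tensorIdFun k Ψ (vecMulVec x (star x))).submatrix (·, i) (·, j) :=
      (submatrix_tensorIdFun Ψ _ i j).symm
    _ = ∑ t, vecMulVec (w i t) (star (w j t)) := hw i j

/-- if `Ψ` is `k`-positive and `u_1, …, u_k ∈ V`, then there are
`m ∈ ℕ` and vectors `w_l^{(n)}` with
`Ψ(|u_i⟩⟨u_j|) = Σ_{n=1}^m |w_i^{(n)}⟩⟨w_j^{(n)}|` for all `i, j`. -/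
theorem stmt8 (d : ℕ) (hd : 0 < d) (k : ℕ) (Ψ : MapV d) (hΨ : IsKPos k Ψ)
    (u : Fin k → (Fin d → ℂ)) :
    ∃ (m : ℕ) (w : Fin k → Fin m → (Fin d → ℂ)),
      ∀ i j : Fin k, Ψ (Matrix.vecMulVec (u i) (star (u j))) =
        ∑ t : Fin m, Matrix.vecMulVec (w i t) (star (w j t)) :=
  stmt8_general d k Ψ hΨ u
end

section
/- Let B be a Hermitian operator on V⊗V and let k ∈ ℕ. The following are equivalent: (1) B is k-block positive; (2) B⊙A is k-entangled for every k-entangled operator A on V⊗V; (3) B⊙A is positive semidefinite for every k-entangled operator A on V⊗V; (4) Tr(J⁻¹(B⊙A)) ≥ 0 for every k-entangled operator A on V⊗V, where the trace of a linear map Θ on L(V) is its Hilbert–Schmidt trace Σ_{α,β} (E_{αβ}|Θ(E_{αβ})) over the matrix-unit basis (E_{αβ}). -/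
open scoped ComplexOrder Kronecker
open Matrix

variable {n : ℕ}

/-!
For `w = Σᵢ uᵢ ⊗ vᵢ` of Schmidt rank at most `k`, `B ⊙ |w⟩⟨w| = S B S*` with `S = 1 ⊗ W`,
`W` the matrix reshaping of `w`, and both `S` and `S*` map every vector to one of Schmidt rank
at most `k`. So if `B` is `k`-block positive, `S B S*` is positive semidefinite, and its
eigenvectors with nonzero eigenvalue lie in the range of `S`: the spectral decomposition exhibits
it as `k`-entangled, and linearity of `⊙` extends this to every `k`-entangled `A`. Conversely
`Tr J⁻¹(C) = ⟨ω, C ω⟩`, and for `w' = conj (swap w)` the operator `S'` built from `w'` satisfies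
`S'* ω = w`, so condition (4) for `A = |w'⟩⟨w'|` reads `⟨w, B w⟩ ≥ 0`.
-/

section ConvexCone

variable {E ι : Type*} [AddCommGroup E] [Module ℝ E]

theorem sum_mem_convexHull_of_smul_mem {S : Set E} (h0 : (0 : E) ∈ S)
    (hS : ∀ r : ℝ, 0 ≤ r → ∀ x ∈ S, r • x ∈ S) (s : Finset ι) {x : ι → E}
    (hx : ∀ i ∈ s, x i ∈ S) : ∑ i ∈ s, x i ∈ convexHull ℝ S := by
  rcases s.eq_empty_or_nonempty with rfl | hs
  · simpa using subset_convexHull ℝ S h0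
  have hcard : (0 : ℝ) < s.card := by exact_mod_cast hs.card_pos
  have hmass : ∑ i ∈ s, x i = s.centerMass (fun _ => (1 : ℝ)) (fun i => (s.card : ℝ) • x i) := by
    simp [Finset.centerMass, ← Finset.smul_sum, smul_smul, hcard.ne']
  rw [hmass]
  exact s.centerMass_mem_convexHull (fun _ _ => zero_le_one) (by simpa using hcard)
    fun i hi => hS _ hcard.le _ (hx i hi)

end ConvexCone

namespace Matrix

variable {𝕜 ι : Type*} [RCLike 𝕜] [Fintype ι] [DecidableEq ι]

theorem IsHermitian.eq_sum_smul_vecMulVec {A : Matrix ι ι 𝕜} (hA : A.IsHermitian) :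
    A = ∑ i, (hA.eigenvalues i : 𝕜) •
      vecMulVec ⇑(hA.eigenvectorBasis i) (star ⇑(hA.eigenvectorBasis i)) := by
  ext p q
  conv_lhs => rw [hA.spectral_theorem, Unitary.conjStarAlgAut_apply]
  simp only [mul_apply, diagonal_apply, star_apply, Function.comp_apply,
    IsHermitian.eigenvectorUnitary_apply, sum_apply, smul_apply, vecMulVec_apply,
    Pi.star_apply, smul_eq_mul, mul_ite, mul_zero, Finset.sum_ite_eq', Finset.mem_univ, if_true]
  exact Finset.sum_congr rfl fun t _ => by ring

theorem PosSemidef.mem_convexHull_vecMulVec_self_star {M : Matrix ι ι 𝕜} (hM : M.PosSemidef)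
    {W : Set (ι → 𝕜)} (hW : ∀ c : 𝕜, ∀ w ∈ W, c • w ∈ W) (hMW : ∀ x, M *ᵥ x ∈ W) :
    M ∈ convexHull ℝ ((fun w => vecMulVec w (star w)) '' W) := by
  set T := (fun w => vecMulVec w (star w)) '' W
  have hT : ∀ r : ℝ, 0 ≤ r → ∀ X ∈ T, r • X ∈ T := by
    rintro r hr _ ⟨w, hw, rfl⟩
    refine ⟨(Real.sqrt r : 𝕜) • w, hW _ w hw, ?_⟩
    show vecMulVec _ (star _) = _
    rw [star_smul, smul_vecMulVec, vecMulVec_smul, smul_smul, RCLike.star_def, RCLike.conj_ofReal,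
      ← RCLike.ofReal_mul, Real.mul_self_sqrt hr, RCLike.real_smul_eq_coe_smul (K := 𝕜)]
  have h0 : (0 : Matrix ι ι 𝕜) ∈ T := by
    simpa using hT 0 le_rfl _ ⟨_, hMW 0, rfl⟩
  rw [hM.isHermitian.eq_sum_smul_vecMulVec]
  refine sum_mem_convexHull_of_smul_mem h0 hT _ fun i _ => ?_
  set e := ⇑(hM.isHermitian.eigenvectorBasis i)
  set μ := hM.isHermitian.eigenvalues i
  rcases (hM.eigenvalues_nonneg i).eq_or_lt with hμ | hμ
  · have : μ = 0 := hμ.symm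
    simpa [this] using h0
  have he : e = M *ᵥ ((μ⁻¹ : 𝕜) • e) := by
    rw [mulVec_smul, hM.isHermitian.mulVec_eigenvectorBasis,
      RCLike.real_smul_eq_coe_smul (K := 𝕜), smul_smul,
      inv_mul_cancel₀ (RCLike.ofReal_ne_zero.mpr hμ.ne'), one_smul]
  rw [← RCLike.real_smul_eq_coe_smul]
  exact hT μ hμ.le _ ⟨e, he ▸ hMW _, rfl⟩

end Matrix

section BlockPositive

variable {k : ℕ}

def schmidtRankLE (n k : ℕ) : Set (Fin n × Fin n → ℂ) :=
  {w | ∃ u v : Fin k → Fin n → ℂ, w = ∑ i, vecTens (u i) (v i)}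

-- The inverse of `Matrix.vec`.
def unvec (w : Fin n × Fin n → ℂ) : Mat n := Matrix.of fun a b => w (b, a)

theorem isKBlockPos_iff {B : Mat2 n} :
    IsKBlockPos k B ↔ ∀ w ∈ schmidtRankLE n k, 0 ≤ star w ⬝ᵥ B *ᵥ w :=
  ⟨fun h _ ⟨u, v, hw⟩ => hw ▸ h u v, fun h u v => h _ ⟨u, v, rfl⟩⟩

theorem isKEntangled_iff {A : Mat2 n} :
    IsKEntangled k A ↔
      A ∈ convexHull ℝ ((fun w => vecMulVec w (star w)) '' schmidtRankLE n k) := by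
  unfold IsKEntangled
  congr! 2
  ext M
  constructor
  · rintro ⟨u, v, rfl⟩; exact ⟨_, ⟨u, v, rfl⟩, rfl⟩
  · rintro ⟨_, ⟨u, v, rfl⟩, rfl⟩; exact ⟨u, v, rfl⟩

theorem smul_mem_schmidtRankLE (c : ℂ) {w : Fin n × Fin n → ℂ} (hw : w ∈ schmidtRankLE n k) :
    c • w ∈ schmidtRankLE n k := by
  obtain ⟨u, v, rfl⟩ := hw
  refine ⟨fun i => c • u i, v, ?_⟩
  ext p
  simp [vecTens, Finset.mul_sum, mul_assoc]

theorem star_comp_swap_mem_schmidtRankLE {w : Fin n × Fin n → ℂ} (hw : w ∈ schmidtRankLE n k) :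
    star (w ∘ Prod.swap) ∈ schmidtRankLE n k := by
  obtain ⟨u, v, rfl⟩ := hw
  refine ⟨fun i => star (v i), fun i => star (u i), ?_⟩
  ext p
  simp [vecTens, mul_comm]

theorem one_kronecker_unvec_mulVec_mem {w : Fin n × Fin n → ℂ} (hw : w ∈ schmidtRankLE n k)
    (x : Fin n × Fin n → ℂ) : (1 ⊗ₖ unvec w) *ᵥ x ∈ schmidtRankLE n k := by
  obtain ⟨u, v, rfl⟩ := hw
  refine ⟨fun i a => ∑ c, u i c * x (a, c), v, ?_⟩
  ext p
  simp only [mulVec, dotProduct, unvec, kroneckerMap_apply, one_apply, of_apply, vecTens,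
    Fintype.sum_prod_type, Finset.sum_apply, ite_mul, one_mul, zero_mul, Finset.sum_mul]
  rw [Finset.sum_comm]
  simp only [Finset.sum_ite_eq, Finset.mem_univ, if_true]
  rw [Finset.sum_comm]
  exact Finset.sum_congr rfl fun i _ => Finset.sum_congr rfl fun c _ => by ring

theorem conjTranspose_one_kronecker_unvec (w : Fin n × Fin n → ℂ) :
    ((1 : Mat n) ⊗ₖ unvec w)ᴴ = (1 : Mat n) ⊗ₖ unvec (star (w ∘ Prod.swap)) := by
  rw [conjTranspose_kronecker, conjTranspose_one]
  rfl

theorem one_kronecker_unvec_mulVec_omegaVec (w : Fin n × Fin n → ℂ) :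
    (1 ⊗ₖ unvec w) *ᵥ omegaVec n = w := by
  ext p
  simp [mulVec, dotProduct, unvec, one_apply, omegaVec, Fintype.sum_prod_type]

theorem odot_apply (B A : Mat2 n) (p q : Fin n × Fin n) :
    odot B A p q = ∑ γ, ∑ δ, B (p.1, γ) (q.1, δ) * A (γ, p.2) (δ, q.2) := by
  simp only [odot, Jmat, Jinv, of_apply, LinearMap.comp_apply, LinearMap.coe_mk, AddHom.coe_mk,
    single, ite_and, ite_mul, one_mul, zero_mul, Finset.sum_ite_irrel, Finset.sum_const_zero,
    Finset.sum_ite_eq, Finset.mem_univ, if_true]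
  exact Finset.sum_congr rfl fun γ _ => Finset.sum_congr rfl fun δ _ => mul_comm _ _

theorem isLinearMap_odot (B : Mat2 n) : IsLinearMap ℝ (odot B) where
  map_add x y := by ext p q; simp [odot_apply, mul_add, Finset.sum_add_distrib]
  map_smul r x := by ext p q; simp [odot_apply, Finset.mul_sum, mul_left_comm]

theorem odot_vecMulVec_self_star (B : Mat2 n) (w : Fin n × Fin n → ℂ) :
    odot B (vecMulVec w (star w)) = (1 ⊗ₖ unvec w) * B * (1 ⊗ₖ unvec w)ᴴ := by
  ext p q
  simp only [odot_apply, vecMulVec_apply, Pi.star_apply, unvec, mul_apply, kroneckerMap_apply,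
    one_apply, of_apply, ite_mul, one_mul, zero_mul, Fintype.sum_prod_type, Finset.sum_ite_irrel,
    Finset.sum_const_zero, Finset.sum_ite_eq, Finset.mem_univ, if_true, conjTranspose_apply,
    apply_ite, star_zero, Finset.sum_mul, mul_zero]
  rw [Finset.sum_comm]
  exact Finset.sum_congr rfl fun γ _ => Finset.sum_congr rfl fun δ _ => by ring

theorem mapTrace_jinv (C : Mat2 n) :
    mapTrace (Jinv C) = star (omegaVec n) ⬝ᵥ C *ᵥ omegaVec n := by
  simp [mapTrace, Jinv, trace, mul_apply, single, mulVec, dotProduct, omegaVec,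
    Fintype.sum_prod_type, ite_and, apply_ite]

theorem star_dotProduct_odot_vecMulVec_mulVec (B : Mat2 n) (w z : Fin n × Fin n → ℂ) :
    star z ⬝ᵥ odot B (vecMulVec w (star w)) *ᵥ z =
      star ((1 ⊗ₖ unvec (star (w ∘ Prod.swap))) *ᵥ z) ⬝ᵥ
        B *ᵥ ((1 ⊗ₖ unvec (star (w ∘ Prod.swap))) *ᵥ z) := by
  rw [odot_vecMulVec_self_star, ← conjTranspose_one_kronecker_unvec, ← mulVec_mulVec,
    ← mulVec_mulVec, star_mulVec, conjTranspose_conjTranspose, dotProduct_mulVec]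

theorem IsKBlockPos.posSemidef_odot_vecMulVec {B : Mat2 n} (hB : B.IsHermitian)
    (h : IsKBlockPos k B) {w : Fin n × Fin n → ℂ} (hw : w ∈ schmidtRankLE n k) :
    (odot B (vecMulVec w (star w))).PosSemidef := by
  refine .of_dotProduct_mulVec_nonneg ?_ fun z => ?_
  · rw [odot_vecMulVec_self_star]
    exact isHermitian_mul_mul_conjTranspose _ hB
  · rw [star_dotProduct_odot_vecMulVec_mulVec]
    exact isKBlockPos_iff.mp h _
      (one_kronecker_unvec_mulVec_mem (star_comp_swap_mem_schmidtRankLE hw) z)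

theorem IsKBlockPos.isKEntangled_odot {B : Mat2 n} (hB : B.IsHermitian) (h : IsKBlockPos k B)
    {A : Mat2 n} (hA : IsKEntangled k A) : IsKEntangled k (odot B A) := by
  rw [isKEntangled_iff] at hA ⊢
  have hgen : odot B '' ((fun w => vecMulVec w (star w)) '' schmidtRankLE n k) ⊆
      convexHull ℝ ((fun w => vecMulVec w (star w)) '' schmidtRankLE n k) := by
    rintro _ ⟨_, ⟨w, hw, rfl⟩, rfl⟩
    refine (h.posSemidef_odot_vecMulVec hB hw).mem_convexHull_vecMulVec_self_star
      (fun c _ => smul_mem_schmidtRankLE c) fun x => ?_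
    rw [odot_vecMulVec_self_star, ← mulVec_mulVec, ← mulVec_mulVec]
    exact one_kronecker_unvec_mulVec_mem hw _
  refine convexHull_min hgen (convex_convexHull ℝ _) ?_
  rw [← (isLinearMap_odot B).image_convexHull]
  exact Set.mem_image_of_mem _ hA

theorem IsKEntangled.posSemidef {A : Mat2 n} (hA : IsKEntangled k A) : A.PosSemidef := by
  rw [isKEntangled_iff] at hA
  have hconvex : Convex ℝ {M : Mat2 n | M.PosSemidef} :=
    fun _ hx _ hy _ _ ha hb _ => (hx.smul ha).add (hy.smul hb)
  refine convexHull_min ?_ hconvex hA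
  rintro _ ⟨w, -, rfl⟩
  exact posSemidef_vecMulVec_self_star w

end BlockPositive

theorem stmt13_general (d : ℕ) (k : ℕ) (B : Mat2 d) (hB : B.IsHermitian) :
    List.TFAE [IsKBlockPos k B,
      ∀ A : Mat2 d, IsKEntangled k A → IsKEntangled k (odot B A),
      ∀ A : Mat2 d, IsKEntangled k A → (odot B A).PosSemidef,
      ∀ A : Mat2 d, IsKEntangled k A → 0 ≤ mapTrace (Jinv (odot B A))] := by
  tfae_have 1 → 2 := fun h _ hA => h.isKEntangled_odot hB hA
  tfae_have 2 → 3 := fun h A hA => (h A hA).posSemidef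
  tfae_have 3 → 4 := fun h A hA => mapTrace_jinv _ ▸ (h A hA).dotProduct_mulVec_nonneg _
  tfae_have 4 → 1 := by
    refine fun h => isKBlockPos_iff.mpr fun w hw => ?_
    set w' := star (w ∘ Prod.swap)
    have hw' : IsKEntangled k (vecMulVec w' (star w')) :=
      isKEntangled_iff.mpr (subset_convexHull ℝ _ ⟨w', star_comp_swap_mem_schmidtRankLE hw, rfl⟩)
    have hww : star (w' ∘ Prod.swap) = w := by ext; simp [w']
    simpa only [mapTrace_jinv, star_dotProduct_odot_vecMulVec_mulVec, hww,
      one_kronecker_unvec_mulVec_omegaVec] using h _ hw'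
  tfae_finish

/-- characterization of `k`-block positive Hermitian operators
`B`: (1) `B` is `k`-block positive; (2) `B⊙A` is `k`-entangled for every
`k`-entangled `A`; (3) `B⊙A` is positive semidefinite for every `k`-entangled
`A`; (4) `Tr(J⁻¹(B⊙A)) ≥ 0` for every `k`-entangled `A`. -/
theorem stmt13 (d : ℕ) (hd : 0 < d) (k : ℕ) (B : Mat2 d) (hB : B.IsHermitian) :
    List.TFAE [IsKBlockPos k B,
      ∀ A : Mat2 d, IsKEntangled k A → IsKEntangled k (odot B A),
      ∀ A : Mat2 d, IsKEntangled k A → (odot B A).PosSemidef,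
      ∀ A : Mat2 d, IsKEntangled k A → 0 ≤ mapTrace (Jinv (odot B A))] :=
  stmt13_general d k B hB
end
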